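/- arXiv:2305.06749 — 2 statements merged into one kernel-verified Lean document; each statement's English description precedes it below -/
import Mathlib

section
/- Let γ ∈ [0,2] and let g : ℝ³×[0,∞) → [0,∞) be measurable with 0 < ∫_{ℝ³×[0,∞)} g dv_* dI_* < ∞, ∫_{ℝ³×[0,∞)} g(v_*,I_*) ⟨v_*,I_*⟩_j^{γ} dv_* dI_* < ∞, and H[g] = ∫_{ℝ³×[0,∞)} g |log g| dv_* dI_* < ∞. Then there exists a constant c > 0 such that for every (v,I) ∈ ℝ³×[0,∞): ∫_{ℝ³×[0,∞)} g(v_*,I_*) · (E/m)^{γ/2} dv_* dI_* ≥ c · ⟨v,I⟩_i^{γ}, where E = (μ/2)|v−v_*|² + I + I_*. -/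
open MeasureTheory Real Set
open scoped ENNReal Classical

noncomputable section

/-- `ℝ³` as a Euclidean space. -/
abbrev E3 := EuclideanSpace ℝ (Fin 3)

/-- The surface measure on the unit sphere `𝕊² ⊂ ℝ³` (total mass `4π`). -/
def sphM : Measure (Metric.sphere (0 : E3) 1) := (volume : Measure E3).toSphere

/-- The phase-space region `ℝ³ × [0,∞)`. -/
def regionVI : Set (E3 × ℝ) := {p | 0 ≤ p.2}

/-- Total energy `E = (μ/2)|v - v_*|² + I + I_*` with reduced mass `μ = m_i m_j/(m_i+m_j)`. -/
def EE (mi mj : ℝ) (v vs : E3) (I Is : ℝ) : ℝ :=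
  mi * mj / (mi + mj) / 2 * ‖v - vs‖ ^ 2 + I + Is

/-- Post-collisional velocity `v' = V + (m_j/M)√(2RE/μ) σ`. -/
def vprime (mi mj : ℝ) (v vs σ : E3) (I Is R : ℝ) : E3 :=
  (mi / (mi + mj)) • v + (mj / (mi + mj)) • vs +
    (mj / (mi + mj) * Real.sqrt (2 * R * EE mi mj v vs I Is / (mi * mj / (mi + mj)))) • σ

/-- Post-collisional partner velocity `v'_* = V - (m_i/M)√(2RE/μ) σ`. -/
def vsprime (mi mj : ℝ) (v vs σ : E3) (I Is R : ℝ) : E3 :=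
  (mi / (mi + mj)) • v + (mj / (mi + mj)) • vs -
    (mi / (mi + mj) * Real.sqrt (2 * R * EE mi mj v vs I Is / (mi * mj / (mi + mj)))) • σ

/-- Post-collisional internal energy `I' = r(1-R)E`. -/
def Iprime (mi mj : ℝ) (v vs : E3) (I Is r R : ℝ) : ℝ :=
  r * (1 - R) * EE mi mj v vs I Is

/-- Post-collisional partner internal energy `I'_* = (1-r)(1-R)E`. -/
def Isprime (mi mj : ℝ) (v vs : E3) (I Is r R : ℝ) : ℝ :=
  (1 - r) * (1 - R) * EE mi mj v vs I Is

/-- Lebesgue bracket `⟨v,I⟩ = √(1 + m|v|²/(2m̄) + I/m̄)`. -/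
def brk (mi mm : ℝ) (v : E3) (I : ℝ) : ℝ :=
  Real.sqrt (1 + mi * ‖v‖ ^ 2 / (2 * mm) + I / mm)

/-- Mass-ratio parameter `s̄_{ij} = min{m_i, m_j}/(m_i + m_j)`. -/
def sbar (mi mj : ℝ) : ℝ := min mi mj / (mi + mj)

/-- The weight `d_{ij}(r,R) = r^{α_i}(1-r)^{α_j}(1-R)^{α_i+α_j+1}√R`. -/
def dij (ai aj r R : ℝ) : ℝ :=
  r ^ ai * (1 - r) ^ aj * (1 - R) ^ (ai + aj + 1) * Real.sqrt R

/-- The constant `ρ(q) = ∫_{[0,1]²} r^{-(1+γ/2)/q}(1-R)^{-1/q} d_{ij}(r,R) b̃(r,R) dr dR`. -/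
def rhoC (ai aj γ q : ℝ) (btil : ℝ → ℝ → ℝ) : ℝ≥0∞ :=
  ∫⁻ rR in Icc (0 : ℝ) 1 ×ˢ Icc (0 : ℝ) 1,
    ENNReal.ofReal (rR.1 ^ (-((1 + γ / 2) / q)) * (1 - rR.2) ^ (-(1 / q))
      * dij ai aj rR.1 rR.2 * btil rR.1 rR.2)

/-- Normalized relative velocity `û = (v - v_*)/|v - v_*|`. -/
def uhat (v vs : E3) : E3 := ‖v - vs‖⁻¹ • (v - vs)

/-- The averaging operator
`S(χ)(v,I,v_*,I_*) = ∫_{𝕊²×[0,1]²} χ(v',I') b(û·σ) r^{-γ/(2q)} d_{ij}(r,R) b̃(r,R) dr dR dσ`,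
read as `0` when `u = 0`. -/
def Sop (mi mj ai aj γ q : ℝ) (b : ℝ → ℝ) (btil : ℝ → ℝ → ℝ) (χ : E3 × ℝ → ℝ)
    (v : E3) (I : ℝ) (vs : E3) (Is : ℝ) : ℝ≥0∞ :=
  if v = vs then 0 else
    ∫⁻ σ, (∫⁻ rR in Icc (0 : ℝ) 1 ×ˢ Icc (0 : ℝ) 1,
      ENNReal.ofReal (χ (vprime mi mj v vs (σ : E3) I Is rR.2,
          Iprime mi mj v vs I Is rR.1 rR.2)
        * b (inner ℝ (uhat v vs) (σ : E3))
        * rR.1 ^ (-(γ / (2 * q))) * dij ai aj rR.1 rR.2 * btil rR.1 rR.2)) ∂sphM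

/-- The (unweighted) `L^q` norm on `ℝ³ × [0,∞)`. -/
def LqN (q : ℝ) (χ : E3 × ℝ → ℝ) : ℝ≥0∞ :=
  (∫⁻ p in regionVI, ENNReal.ofReal (χ p) ^ q) ^ (1 / q)

/-- The polynomially weighted `L^p` norm `‖φ‖_{L^p_{i,s}}`. -/
def LpW (pp s mi mm : ℝ) (φ : E3 × ℝ → ℝ) : ℝ≥0∞ :=
  (∫⁻ x in regionVI, ENNReal.ofReal (φ x * brk mi mm x.1 x.2 ^ s) ^ pp) ^ (1 / pp)

/-- The gain part `Q⁺(f,g)` of the collision operator (integrand read as `0` when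
`I' I'_* = 0`). -/
def Qgain (mi mj ai aj : ℝ)
    (B : (E3 × ℝ) × (E3 × ℝ) × Metric.sphere (0 : E3) 1 × ℝ × ℝ → ℝ)
    (f g : E3 × ℝ → ℝ) (v : E3) (I : ℝ) : ℝ≥0∞ :=
  ∫⁻ x in regionVI, ∫⁻ σ, (∫⁻ rR in Icc (0 : ℝ) 1 ×ˢ Icc (0 : ℝ) 1,
    ENNReal.ofReal (
      if Iprime mi mj v x.1 I x.2 rR.1 rR.2 * Isprime mi mj v x.1 I x.2 rR.1 rR.2 = 0 then 0
      else f (vprime mi mj v x.1 (σ : E3) I x.2 rR.2, Iprime mi mj v x.1 I x.2 rR.1 rR.2)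
        * g (vsprime mi mj v x.1 (σ : E3) I x.2 rR.2, Isprime mi mj v x.1 I x.2 rR.1 rR.2)
        * (I / Iprime mi mj v x.1 I x.2 rR.1 rR.2) ^ ai
        * (x.2 / Isprime mi mj v x.1 I x.2 rR.1 rR.2) ^ aj
        * B ((v, I), x, σ, rR.1, rR.2) * dij ai aj rR.1 rR.2)) ∂sphM

/-! The measure `g dv_* dI_*` on `ℝ³ × [0,∞)` is finite with positive mass `G`. By tightness, all
but `G/4` of it lies in a ball `‖(v_*, I_*)‖ ≤ R`, and by absolute continuity of the integral every
ball of a small radius `δ` carries less than `G/4`, uniformly in its centre. Hence for every `v` at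
least `G/2` of the mass sits where `‖v_*‖ ≤ R` and `(v_*, I_*)` is `δ`-far from `(v, 0)`. On that
set `E` is bounded below by a positive constant, while `‖v‖² ≤ 2‖v - v_*‖² + 2‖v_*‖²` gives
`E/m ≥ β ⟨v,I⟩_i² - C(R)`; combining the two bounds yields `E/m ≥ c ⟨v,I⟩_i²` there. -/

open Filter Topology Module Metric

theorem sq_norm_le_two_mul_sq_norm_sub_add {G : Type*} [SeminormedAddCommGroup G] (a b : G) :
    ‖a‖ ^ 2 ≤ 2 * ‖a - b‖ ^ 2 + 2 * ‖b‖ ^ 2 := by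
  have h : ‖a‖ ≤ ‖a - b‖ + ‖b‖ := norm_le_norm_sub_add a b
  nlinarith [add_sq_le (a := ‖a - b‖) (b := ‖b‖), norm_nonneg a]

theorem mul_le_of_le_of_sub_le {a β C W x : ℝ} (ha : 0 < a) (hC : 0 ≤ C) (hxa : a ≤ x)
    (hxW : β * W - C ≤ x) : a * β / (a + C) * W ≤ x := by
  -- `a β W = a (β W - C) + C a ≤ (a + C) x`
  rw [div_mul_eq_mul_div, div_le_iff₀ (by positivity)]
  nlinarith [mul_le_mul_of_nonneg_left hxa hC, mul_le_mul_of_nonneg_left hxW ha.le]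

theorem rpow_mul_rpow_le_of_mul_sq_le {c b x γ : ℝ} (hc : 0 ≤ c) (hb : 0 ≤ b) (hγ : 0 ≤ γ)
    (h : c * b ^ 2 ≤ x) : c ^ (γ / 2) * b ^ γ ≤ x ^ (γ / 2) := by
  have hb2 : b ^ γ = (b ^ 2) ^ (γ / 2) := by
    rw [← Real.rpow_natCast, ← Real.rpow_mul hb]; ring_nf
  rw [hb2, ← Real.mul_rpow hc (by positivity)]
  exact Real.rpow_le_rpow (by positivity) h (by positivity)

theorem brk_sq {mi mm I : ℝ} (hmi : 0 ≤ mi) (hmm : 0 ≤ mm) (hI : 0 ≤ I) (v : E3) :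
    brk mi mm v I ^ 2 = 1 + mi * ‖v‖ ^ 2 / (2 * mm) + I / mm :=
  Real.sq_sqrt (by positivity)

theorem EE_ge_of_far {mi mj I Is δ : ℝ} (hmi : 0 < mi) (hmj : 0 < mj) (hI : 0 ≤ I)
    (hIs : 0 ≤ Is) (hδ : 0 ≤ δ) {v vs : E3} (hfar : δ ≤ ‖v - vs‖ ∨ δ ≤ Is) :
    min (mi * mj / (mi + mj) / 2 * δ ^ 2) δ ≤ EE mi mj v vs I Is := by
  have hμ : 0 ≤ mi * mj / (mi + mj) / 2 := by positivity
  unfold EE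
  rcases hfar with h | h
  · have := mul_le_mul_of_nonneg_left (pow_le_pow_left₀ hδ h 2) hμ
    linarith [min_le_left (mi * mj / (mi + mj) / 2 * δ ^ 2) δ]
  · have : 0 ≤ mi * mj / (mi + mj) / 2 * ‖v - vs‖ ^ 2 := by positivity
    linarith [min_le_right (mi * mj / (mi + mj) / 2 * δ ^ 2) δ]

/-- The factor `β = m_j / (2M) = μ / (2 m_i)` is chosen so that `β m_i ‖v‖² / (2m) = μ ‖v‖² / (4m)`,
which is what `‖v - v_*‖² ≥ ‖v‖²/2 - ‖v_*‖²` provides. -/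
theorem EE_div_ge_brk_sq {mi mj mm I Is : ℝ} (hmi : 0 < mi) (hmj : 0 < mj) (hmm : 0 < mm)
    (hI : 0 ≤ I) (hIs : 0 ≤ Is) (v vs : E3) :
    mj / (2 * (mi + mj)) * brk mi mm v I ^ 2
        - (mj / (2 * (mi + mj)) + mi * mj / (mi + mj) * ‖vs‖ ^ 2 / (2 * mm))
      ≤ EE mi mj v vs I Is / mm := by
  have hβ : mj / (2 * (mi + mj)) ≤ 1 := by
    rw [div_le_one (by positivity)]; linarith
  have hv := sq_norm_le_two_mul_sq_norm_sub_add v vs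
  have hkey : mi * mj / (mi + mj) / 4 * ‖v‖ ^ 2 + mj / (2 * (mi + mj)) * I
      - mi * mj / (mi + mj) / 2 * ‖vs‖ ^ 2 ≤ EE mi mj v vs I Is := by
    unfold EE
    have : 0 ≤ mi * mj / (mi + mj) := by positivity
    nlinarith [mul_le_mul_of_nonneg_right hβ hI]
  rw [brk_sq hmi.le hmm.le hI, le_div_iff₀ hmm]
  refine le_of_eq_of_le ?_ hkey
  field_simp
  ring

theorem exists_pos_mul_brk_sq_le_EE_div {mi mj mm δ : ℝ} (hmi : 0 < mi) (hmj : 0 < mj)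
    (hmm : 0 < mm) (hδ : 0 < δ) (R : ℝ) :
    ∃ c > 0, ∀ (v vs : E3) (I Is : ℝ), 0 ≤ I → 0 ≤ Is → ‖vs‖ ≤ R →
      (δ ≤ ‖v - vs‖ ∨ δ ≤ Is) → c * brk mi mm v I ^ 2 ≤ EE mi mj v vs I Is / mm := by
  set a := min (mi * mj / (mi + mj) / 2 * δ ^ 2) δ / mm
  set β := mj / (2 * (mi + mj))
  set C := β + mi * mj / (mi + mj) * R ^ 2 / (2 * mm)
  have ha : 0 < a := div_pos (lt_min (by positivity) hδ) hmm
  refine ⟨a * β / (a + C), by positivity, fun v vs I Is hI hIs hvs hfar => ?_⟩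
  refine mul_le_of_le_of_sub_le ha (by positivity) ?_ ?_
  · exact div_le_div_of_nonneg_right (EE_ge_of_far hmi hmj hI hIs hδ.le hfar) hmm.le
  · refine le_trans ?_ (EE_div_ge_brk_sq hmi hmj hmm hI hIs v vs)
    simp only [C, β]
    gcongr

theorem exists_measureReal_compl_closedBall_lt {X : Type*} [MeasurableSpace X]
    [PseudoMetricSpace X] [CompleteSpace X] [SecondCountableTopology X] [BorelSpace X]
    (ν : Measure X) [IsFiniteMeasure ν] (x : X) {ε : ℝ} (hε : 0 < ε) :
    ∃ R, ν.real (closedBall x R)ᶜ < ε := by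
  have h := tendsto_measure_compl_closedBall_of_isTightMeasureSet
    (isTightMeasureSet_singleton (μ := ν)) x
  simp only [mem_singleton_iff, iSup_iSup_eq_left] at h
  have h' := (ENNReal.tendsto_toReal ENNReal.zero_ne_top).comp h
  exact (h'.eventually (gt_mem_nhds (by simpa using hε))).exists

theorem exists_pos_forall_withDensity_ball_lt {E : Type*} [NormedAddCommGroup E]
    [NormedSpace ℝ E] [MeasurableSpace E] [BorelSpace E] [FiniteDimensional ℝ E] [Nontrivial E]
    (μ : Measure E) [μ.IsAddHaarMeasure] (s : Set E) {f : E → ℝ≥0∞}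
    (hf : ∫⁻ x in s, f x ∂μ ≠ ∞) {ε : ℝ≥0∞} (hε : ε ≠ 0) :
    ∃ δ > 0, ∀ x, (μ.restrict s).withDensity f (ball x δ) < ε := by
  obtain ⟨η, hη, hsmall⟩ := exists_pos_setLIntegral_lt_of_measure_lt hf hε
  have hvol : Tendsto (fun r : ℝ => ENNReal.ofReal (r ^ finrank ℝ E) * μ (ball 0 1))
      (𝓝[>] 0) (𝓝 0) := by
    have h0 : Tendsto (fun r : ℝ => ENNReal.ofReal (r ^ finrank ℝ E)) (𝓝 0) (𝓝 0) := by
      simpa [Function.comp_def, (finrank_pos (R := ℝ) (M := E)).ne'] using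
        (ENNReal.continuous_ofReal.comp (continuous_pow (finrank ℝ E))).tendsto 0
    simpa using (ENNReal.Tendsto.mul_const h0 (Or.inr measure_ball_lt_top.ne)).mono_left
      nhdsWithin_le_nhds
  obtain ⟨δ, hδη, hδ⟩ := ((hvol.eventually (gt_mem_nhds hη)).and self_mem_nhdsWithin).exists
  refine ⟨δ, hδ, fun x => ?_⟩
  rw [withDensity_apply f measurableSet_ball]
  refine hsmall _ ((Measure.restrict_apply_le _ _).trans_lt ?_)
  rwa [Measure.addHaar_ball_of_pos μ x hδ]

theorem half_le_measureReal_diff {α : Type*} [MeasurableSpace α] (ν : Measure α)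
    [IsFiniteMeasure ν] {K B : Set α} (hK : ν.real Kᶜ ≤ ν.real univ / 4)
    (hB : ν.real B ≤ ν.real univ / 4) : ν.real univ / 2 ≤ ν.real (K \ B) := by
  have hcover : univ ⊆ K \ B ∪ (Kᶜ ∪ B) := fun x _ => by
    by_cases hK : x ∈ K <;> by_cases hB : x ∈ B <;> simp [hK, hB]
  have : ν.real univ ≤ ν.real (K \ B) + (ν.real Kᶜ + ν.real B) :=
    calc ν.real univ ≤ ν.real (K \ B ∪ (Kᶜ ∪ B)) := measureReal_mono hcover
      _ ≤ _ := (measureReal_union_le _ _).trans (by gcongr; exact measureReal_union_le _ _)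
  linarith

theorem ofReal_mul_withDensity_le_setLIntegral {α : Type*} [MeasurableSpace α] (μ : Measure α)
    {s S : Set α} (hs : MeasurableSet s) (hS : MeasurableSet S) {f F : α → ℝ}
    (hf : ∀ x, 0 ≤ f x) {c : ℝ} (hc : ∀ x ∈ S ∩ s, c ≤ F x) :
    ENNReal.ofReal c * (μ.restrict s).withDensity (fun x => ENNReal.ofReal (f x)) S
      ≤ ∫⁻ x in s, ENNReal.ofReal (f x * F x) ∂μ := by
  rw [withDensity_apply _ hS, Measure.restrict_restrict hS,
    ← lintegral_const_mul' _ _ ENNReal.ofReal_ne_top]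
  calc ∫⁻ x in S ∩ s, ENNReal.ofReal c * ENNReal.ofReal (f x) ∂μ
      ≤ ∫⁻ x in S ∩ s, ENNReal.ofReal (f x * F x) ∂μ := by
        refine setLIntegral_mono' (hS.inter hs) fun x hx => ?_
        rw [← ENNReal.ofReal_mul' (hf x), mul_comm]
        exact ENNReal.ofReal_le_ofReal (mul_le_mul_of_nonneg_left (hc x hx) (hf x))
    _ ≤ ∫⁻ x in s, ENNReal.ofReal (f x * F x) ∂μ := lintegral_mono_set inter_subset_right

theorem le_norm_sub_or_le_of_notMem_ball {E : Type*} [SeminormedAddCommGroup E] {v : E}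
    {x : E × ℝ} {δ : ℝ} (hx : x ∉ ball (v, 0) δ) (hx₂ : 0 ≤ x.2) :
    δ ≤ ‖v - x.1‖ ∨ δ ≤ x.2 := by
  rwa [mem_ball, not_lt, Prod.dist_eq, le_max_iff, dist_comm, dist_eq_norm,
    Real.dist_eq, sub_zero, abs_of_nonneg hx₂] at hx

instance : (volume : Measure (E3 × ℝ)).IsAddHaarMeasure := by
  rw [Measure.volume_eq_prod]; infer_instance

theorem kernel_weak_form_lower_bound_general
    (mi mj mm γ : ℝ) (hmi : 0 < mi) (hmj : 0 < mj) (hmm : 0 < mm)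
    (hγ0 : 0 ≤ γ)
    (g : E3 × ℝ → ℝ) (hg0 : ∀ x, 0 ≤ g x)
    (hmass0 : 0 < ∫⁻ x in regionVI, ENNReal.ofReal (g x))
    (hmass : (∫⁻ x in regionVI, ENNReal.ofReal (g x)) < ⊤) :
    ∃ c : ℝ, 0 < c ∧ ∀ (v : E3) (I : ℝ), 0 ≤ I →
      ENNReal.ofReal (c * brk mi mm v I ^ γ)
        ≤ ∫⁻ x in regionVI,
            ENNReal.ofReal (g x * (EE mi mj v x.1 I x.2 / mm) ^ (γ / 2)) := by
  set ν := (volume.restrict regionVI).withDensity fun x => ENNReal.ofReal (g x)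
  have hν_univ : ν univ = ∫⁻ x in regionVI, ENNReal.ofReal (g x) := by
    rw [withDensity_apply _ MeasurableSet.univ, Measure.restrict_univ]
  have : IsFiniteMeasure ν := ⟨hν_univ ▸ hmass⟩
  have hν : 0 < ν.real univ / 4 :=
    div_pos (ENNReal.toReal_pos (hν_univ ▸ hmass0.ne') (measure_ne_top ν univ)) four_pos
  obtain ⟨R, hR⟩ := exists_measureReal_compl_closedBall_lt ν 0 hν
  obtain ⟨δ, hδ, hball⟩ := exists_pos_forall_withDensity_ball_lt volume regionVI hmass.ne
    (ENNReal.ofReal_pos.2 hν).ne'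
  obtain ⟨c, hc, hpt⟩ := exists_pos_mul_brk_sq_le_EE_div hmi hmj hmm hδ R
  refine ⟨c ^ (γ / 2) * (ν.real univ / 2),
    mul_pos (Real.rpow_pos_of_pos hc _) (by linarith), fun v I hI => ?_⟩
  have hb : 0 ≤ c ^ (γ / 2) * brk mi mm v I ^ γ := by unfold brk; positivity
  have hgood := half_le_measureReal_diff ν hR.le
    (ENNReal.toReal_lt_of_lt_ofReal (hball (v, 0))).le
  calc ENNReal.ofReal (c ^ (γ / 2) * (ν.real univ / 2) * brk mi mm v I ^ γ)
      ≤ ENNReal.ofReal (c ^ (γ / 2) * brk mi mm v I ^ γ)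
          * ν (closedBall 0 R \ ball (v, 0) δ) := by
        rw [← ofReal_measureReal, ← ENNReal.ofReal_mul hb, mul_right_comm]
        exact ENNReal.ofReal_le_ofReal (mul_le_mul_of_nonneg_left hgood hb)
    _ ≤ _ := by
        refine ofReal_mul_withDensity_le_setLIntegral volume
          (measurableSet_le measurable_const measurable_snd)
          (isClosed_closedBall.measurableSet.diff measurableSet_ball) hg0 ?_
        rintro x ⟨⟨hxR, hxδ⟩, hx₂⟩
        have hx₁ : ‖x.1‖ ≤ R := (norm_fst_le x).trans (mem_closedBall_zero_iff.1 hxR)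
        exact rpow_mul_rpow_le_of_mul_sq_le hc.le (Real.sqrt_nonneg _) hγ0
          (hpt v x.1 I x.2 hI hx₂ hx₁ (le_norm_sub_or_le_of_notMem_ball hxδ hx₂))

/-- Lemma 6.1 (Lower Bound Lemma): entropy-based lower bound for the weak form of the
velocity-internal-energy kernel `(E/m)^{γ/2}` against `g`. -/
theorem kernel_weak_form_lower_bound
    (mi mj mm γ : ℝ) (hmi : 0 < mi) (hmj : 0 < mj) (hmm : 0 < mm)
    (hγ0 : 0 ≤ γ) (hγ2 : γ ≤ 2)
    (g : E3 × ℝ → ℝ) (hg : Measurable g) (hg0 : ∀ x, 0 ≤ g x)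
    (hmass0 : 0 < ∫⁻ x in regionVI, ENNReal.ofReal (g x))
    (hmass : (∫⁻ x in regionVI, ENNReal.ofReal (g x)) < ⊤)
    (hmom : (∫⁻ x in regionVI, ENNReal.ofReal (g x * brk mj mm x.1 x.2 ^ γ)) < ⊤)
    (hent : (∫⁻ x in regionVI, ENNReal.ofReal (g x * |Real.log (g x)|)) < ⊤) :
    ∃ c : ℝ, 0 < c ∧ ∀ (v : E3) (I : ℝ), 0 ≤ I →
      ENNReal.ofReal (c * brk mi mm v I ^ γ)
        ≤ ∫⁻ x in regionVI,
            ENNReal.ofReal (g x * (EE mi mj v x.1 I x.2 / mm) ^ (γ / 2)) :=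
  kernel_weak_form_lower_bound_general mi mj mm γ hmi hmj hmm hγ0 g hg0 hmass0 hmass
end
end

section
/- For all v, v_* ∈ ℝ³ and I, I_* ∈ [0,∞) one has √(E/m) ≥ √(s̄_{ij}/2) · √( m_i|v|²/(2m) + I/m ) − ⟨v_*,I_*⟩_j, where E = (μ/2)|v−v_*|² + I + I_*. -/
open MeasureTheory Real Set
open scoped ENNReal Classical

noncomputable section

/-! Since `s̄ m_i ≤ μ ≤ m_j`, the parallelogram-type bound `|v|² ≤ 2|v - v_*|² + 2|v_*|²` gives
`(s̄/2)(m_i|v|²/2 + I) ≤ E + m_j|v_*|²/2 + I_*`. Dividing by `m` and taking square roots with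
`√(a + b) ≤ √a + √b` leaves `√(m_j|v_*|²/(2m) + I_*/m)`, which is at most `⟨v_*,I_*⟩_j`. -/

lemma sqrt_add_le_sqrt_add_sqrt {a b : ℝ} (ha : 0 ≤ a) (hb : 0 ≤ b) : √(a + b) ≤ √a + √b := by
  rw [Real.sqrt_le_iff]
  refine ⟨by positivity, ?_⟩
  nlinarith [Real.sq_sqrt ha, Real.sq_sqrt hb, Real.sqrt_nonneg a, Real.sqrt_nonneg b]

lemma norm_sq_le_two_mul_norm_sub_sq_add {E : Type*} [SeminormedAddCommGroup E] (u v : E) :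
    ‖u‖ ^ 2 ≤ 2 * (‖u - v‖ ^ 2 + ‖v‖ ^ 2) :=
  calc ‖u‖ ^ 2 ≤ (‖u - v‖ + ‖v‖) ^ 2 := by
        gcongr; linarith [norm_le_norm_add_norm_sub' u v]
    _ ≤ 2 * (‖u - v‖ ^ 2 + ‖v‖ ^ 2) := add_sq_le

section Masses

variable {mi mj : ℝ}

lemma reducedMass_le_right (hmi : 0 ≤ mi) (hmj : 0 < mj) : mi * mj / (mi + mj) ≤ mj := by
  rw [div_le_iff₀ (by positivity)]
  nlinarith

lemma sbar_mul_le_reducedMass (hmi : 0 < mi) (hmj : 0 < mj) :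
    sbar mi mj * mi ≤ mi * mj / (mi + mj) := by
  rw [sbar, div_mul_eq_mul_div, mul_comm mi mj]
  gcongr
  exact min_le_right mi mj

lemma sbar_le_one (hmi : 0 < mi) (hmj : 0 < mj) : sbar mi mj ≤ 1 := by
  rw [sbar, div_le_one (by positivity)]
  linarith [min_le_left mi mj]

lemma sbar_nonneg (hmi : 0 ≤ mi) (hmj : 0 ≤ mj) : 0 ≤ sbar mi mj := by
  unfold sbar
  have := le_min hmi hmj
  positivity

lemma sbar_mul_kinetic_le (hmi : 0 < mi) (hmj : 0 < mj) (v vs : E3) :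
    sbar mi mj / 2 * (mi * ‖v‖ ^ 2 / 2) ≤
      mi * mj / (mi + mj) / 2 * ‖v - vs‖ ^ 2 + mj * ‖vs‖ ^ 2 / 2 := by
  have hμ := sbar_mul_le_reducedMass hmi hmj
  have hμj := reducedMass_le_right hmi.le hmj
  have hnorm := norm_sq_le_two_mul_norm_sub_sq_add v vs
  have hs := sbar_nonneg hmi.le hmj.le
  have hvs : 0 ≤ ‖vs‖ ^ 2 := by positivity
  nlinarith [mul_le_mul_of_nonneg_left hnorm (mul_nonneg hs hmi.le),
    mul_le_mul_of_nonneg_right hμ (sq_nonneg ‖v‖), mul_le_mul_of_nonneg_right hμj hvs]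

lemma sbar_mul_energy_le (hmi : 0 < mi) (hmj : 0 < mj) (v vs : E3) {I Is : ℝ}
    (hI : 0 ≤ I) (hIs : 0 ≤ Is) :
    sbar mi mj / 2 * (mi * ‖v‖ ^ 2 / 2 + I) ≤ EE mi mj v vs I Is + (mj * ‖vs‖ ^ 2 / 2 + Is) := by
  have hkin := sbar_mul_kinetic_le hmi hmj v vs
  have hI' : sbar mi mj / 2 * I ≤ I := by
    nlinarith [sbar_le_one hmi hmj]
  rw [EE]
  linarith

end Masses

def scaledEnergy (mi mm : ℝ) (v : E3) (I : ℝ) : ℝ := mi * ‖v‖ ^ 2 / (2 * mm) + I / mm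

lemma scaledEnergy_eq_div (mi mm : ℝ) (v : E3) (I : ℝ) :
    scaledEnergy mi mm v I = (mi * ‖v‖ ^ 2 / 2 + I) / mm := by
  rw [scaledEnergy]
  ring

lemma scaledEnergy_nonneg {mi mm : ℝ} (hmi : 0 ≤ mi) (hmm : 0 < mm) (v : E3) {I : ℝ}
    (hI : 0 ≤ I) :
    0 ≤ scaledEnergy mi mm v I := by
  unfold scaledEnergy
  positivity

lemma sqrt_scaledEnergy_le_brk (mi mm : ℝ) (v : E3) (I : ℝ) :
    √(scaledEnergy mi mm v I) ≤ brk mi mm v I := by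
  rw [brk, add_assoc]
  exact Real.sqrt_le_sqrt (le_add_of_nonneg_left zero_le_one)

/-- Step 1 of the Lower Bound Lemma:
`√(E/m) ≥ √(s̄/2) √(m_i|v|²/(2m) + I/m) − ⟨v_*,I_*⟩_j`. -/
theorem energy_bracket_lower_bound
    (mi mj mm : ℝ) (hmi : 0 < mi) (hmj : 0 < mj) (hmm : 0 < mm)
    (v vs : E3) (I Is : ℝ) (hI : 0 ≤ I) (hIs : 0 ≤ Is) :
    Real.sqrt (sbar mi mj / 2) * Real.sqrt (mi * ‖v‖ ^ 2 / (2 * mm) + I / mm)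
        - brk mj mm vs Is
      ≤ Real.sqrt (EE mi mj v vs I Is / mm) := by
  rw [sub_le_iff_le_add]
  have hE : 0 ≤ EE mi mj v vs I Is / mm := by unfold EE; positivity
  have hB := scaledEnergy_nonneg hmj.le hmm vs hIs
  have key : sbar mi mj / 2 * scaledEnergy mi mm v I ≤
      EE mi mj v vs I Is / mm + scaledEnergy mj mm vs Is := by
    rw [scaledEnergy_eq_div, scaledEnergy_eq_div, mul_div_assoc', ← add_div]
    exact div_le_div_of_nonneg_right (sbar_mul_energy_le hmi hmj v vs hI hIs) hmm.le
  calc √(sbar mi mj / 2) * √(scaledEnergy mi mm v I)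
      = √(sbar mi mj / 2 * scaledEnergy mi mm v I) :=
        (Real.sqrt_mul (by linarith [sbar_nonneg hmi.le hmj.le]) _).symm
    _ ≤ √(EE mi mj v vs I Is / mm + scaledEnergy mj mm vs Is) := Real.sqrt_le_sqrt key
    _ ≤ √(EE mi mj v vs I Is / mm) + √(scaledEnergy mj mm vs Is) :=
        sqrt_add_le_sqrt_add_sqrt hE hB
    _ ≤ √(EE mi mj v vs I Is / mm) + brk mj mm vs Is := by
        gcongr; exact sqrt_scaledEnergy_le_brk mj mm vs Is
end
end
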